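/- Let Y be a compactification of the discrete space ℕ, given by an injective map d : ℕ → Y with dense range and each d(n) isolated in Y, with remainder R = Y \ d(ℕ), and let Z₀ = {f ∈ C(Y) : f(y) = 0 for every y ∈ R}. Then: (i) the map sending f ∈ Z₀ to the sequence (f(d(n)))_{n ∈ ℕ} is a linear isometric bijection from Z₀ onto c₀; (ii) the restriction operator ρ : C(Y) → C(R), ρ(f) = f restricted to R, is a bounded surjective linear operator whose kernel is Z₀, and the induced map from the quotient Banach space C(Y)/Z₀ to C(R) is an isometric isomorphism. -/

import Mathlib

/-!
Because the points `d n` are isolated, a compact subset of `Y` contained in `d(ℕ)` is finite.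
So a function vanishing on the remainder tends to `0` along `d`, and conversely a null sequence
extended by `0` is continuous; density of `d(ℕ)` makes this correspondence isometric.
For the quotient, restriction to the closed set `R` has norm at most one, and norm-preserving
Tietze extension puts into every coset `f + Z₀` an element of norm `‖f|_R‖`.
-/

open Cardinal Set Filter Topology

/-- The Banach space `c₀` of real sequences converging to `0`, with the sup norm. -/
abbrev czero : Type := ZeroAtInftyContinuousMap ℕ ℝ

/-- There exists a nontrivial twisted sum of `Y` and `X`: a short exact sequence
`0 → Y → Z → X → 0` of Banach spaces in which the image of `Y` is not complemented. -/
def ExistsNontrivialTwistedSum (Y X : Type) [NormedAddCommGroup Y] [NormedSpace ℝ Y]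
    [NormedAddCommGroup X] [NormedSpace ℝ X] : Prop :=
  ∃ (Z : Type) (_ : NormedAddCommGroup Z) (_ : NormedSpace ℝ Z) (_ : CompleteSpace Z)
    (j : Y →L[ℝ] Z) (q : Z →L[ℝ] X),
      Function.Injective j ∧ IsClosed (Set.range j) ∧ Function.Surjective q ∧
      LinearMap.ker (q : Z →ₗ[ℝ] X) = LinearMap.range (j : Y →ₗ[ℝ] Z) ∧
      ¬(LinearMap.range (j : Y →ₗ[ℝ] Z)).ClosedComplemented
/-- The canonical copy of `c₀` in `C(Y)`: the continuous functions vanishing at every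
point of the remainder `Y \ d(ℕ)`. -/
def Zsub (Y : Type) [TopologicalSpace Y] [CompactSpace Y] (d : ℕ → Y) :
    Submodule ℝ C(Y, ℝ) where
  carrier := {f : C(Y, ℝ) | ∀ y : Y, y ∉ Set.range d → f y = 0}
  add_mem' := fun hf hg y hy => by simp [hf y hy, hg y hy]
  zero_mem' := fun y hy => rfl
  smul_mem' := fun c f hf y hy => by simp [hf y hy]

open Function

section Compactification

variable {ι Y : Type*} [TopologicalSpace Y] {d : ι → Y}

theorem isClosed_compl_range (hiso : ∀ i, IsOpen ({d i} : Set Y)) : IsClosed (range d)ᶜ := by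
  rw [isClosed_compl_iff, range_eq_iUnion]
  exact isOpen_iUnion hiso

theorem finite_preimage_of_isCompact_subset_range (hinj : Injective d)
    (hiso : ∀ i, IsOpen ({d i} : Set Y)) {K : Set Y} (hK : IsCompact K)
    (hKd : K ⊆ range d) : (d ⁻¹' K).Finite := by
  obtain ⟨t, ht⟩ := hK.elim_finite_subcover (fun i => ({d i} : Set Y)) hiso
    (by simpa [← range_eq_iUnion] using hKd)
  refine t.finite_toSet.subset fun i hi => ?_
  obtain ⟨j, hj, hji⟩ := mem_iUnion₂.1 (ht hi)
  rwa [← hinj (mem_singleton_iff.1 hji)] at hj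

theorem tendsto_cofinite_comp_of_eq_off_range [CompactSpace Y] {Z : Type*}
    [TopologicalSpace Z] (hinj : Injective d) (hiso : ∀ i, IsOpen ({d i} : Set Y))
    (f : C(Y, Z)) {z : Z} (hf : ∀ y ∉ range d, f y = z) :
    Tendsto (f ∘ d) cofinite (𝓝 z) := by
  refine tendsto_nhds.2 fun U hU hzU => ?_
  have hfin := finite_preimage_of_isCompact_subset_range hinj hiso
    (hU.isClosed_compl.preimage f.continuous).isCompact
    fun y hy => by_contra fun hyd => hy (hf y hyd ▸ hzU)
  exact mem_cofinite.2 hfin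

theorem continuous_extend_zero_of_tendsto [T1Space Y] {E : Type*} [TopologicalSpace E] [Zero E]
    (hinj : Injective d) (hiso : ∀ i, IsOpen ({d i} : Set Y)) {g : ι → E}
    (hg : Tendsto g cofinite (𝓝 0)) : Continuous (extend d g 0) := by
  refine continuous_iff_continuousAt.2 fun y => ?_
  by_cases hy : y ∈ range d
  · obtain ⟨i, rfl⟩ := hy
    rw [ContinuousAt, (isOpen_singleton_iff_nhds_eq_pure _).1 (hiso i)]
    exact tendsto_pure_nhds _ _
  · rw [ContinuousAt, extend_apply' _ _ _ fun ⟨i, hi⟩ => hy ⟨i, hi⟩]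
    refine tendsto_nhds.2 fun U hU h0U => ?_
    -- only the finitely many `d i` with `g i ∉ U` are mapped outside `U`
    have hfin : {i | g i ∉ U}.Finite := mem_cofinite.1 (hg (hU.mem_nhds h0U))
    refine mem_of_superset ((hfin.image d).isClosed.isOpen_compl.mem_nhds ?_) fun z hz => ?_
    · exact fun ⟨i, _, hi⟩ => hy ⟨i, hi⟩
    · by_cases hzd : z ∈ range d
      · obtain ⟨i, rfl⟩ := hzd
        rw [mem_preimage, hinj.extend_apply]
        by_contra hgi
        exact hz ⟨i, hgi, rfl⟩
      · rwa [mem_preimage, extend_apply' _ _ _ fun ⟨i, hi⟩ => hzd ⟨i, hi⟩]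

theorem ContinuousMap.norm_le_of_denseRange [CompactSpace Y] {E : Type*}
    [SeminormedAddCommGroup E] (hd : DenseRange d) (f : C(Y, E)) {c : ℝ} (hc : 0 ≤ c)
    (h : ∀ i, ‖f (d i)‖ ≤ c) : ‖f‖ ≤ c :=
  (f.norm_le hc).2 fun y =>
    hd.induction_on (p := fun y => ‖f y‖ ≤ c) y (isClosed_le f.continuous.norm continuous_const) h

end Compactification

section QuotientKer

variable {R E F : Type*} [Ring R] [SeminormedAddCommGroup E] [SeminormedAddCommGroup F]
  [Module R E] [Module R F] (ρ : E →ₗ[R] F)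

theorem LinearMap.norm_mk_ker_eq (hρ : ∀ x, ‖ρ x‖ ≤ ‖x‖)
    (hlift : ∀ y, ∃ x, ρ x = y ∧ ‖x‖ ≤ ‖y‖) (x : E) :
    ‖(Submodule.Quotient.mk x : E ⧸ LinearMap.ker ρ)‖ = ‖ρ x‖ := by
  refine le_antisymm ?_ (QuotientAddGroup.le_norm_iff.2 fun x' hx' => ?_)
  · obtain ⟨x', hx', hnorm⟩ := hlift (ρ x)
    have hmk : (Submodule.Quotient.mk x : E ⧸ LinearMap.ker ρ) = Submodule.Quotient.mk x' := by
      rw [Submodule.Quotient.eq, LinearMap.mem_ker, map_sub, hx', sub_self]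
    exact hmk ▸ (Submodule.Quotient.norm_mk_le _ x').trans hnorm
  · have : ρ x' = ρ x := by
      rw [← sub_eq_zero, ← map_sub, ← LinearMap.mem_ker, ← Submodule.Quotient.eq]
      exact hx'
    exact this ▸ hρ x'

noncomputable def LinearMap.quotKerIsometryEquiv (hρ : ∀ x, ‖ρ x‖ ≤ ‖x‖)
    (hlift : ∀ y, ∃ x, ρ x = y ∧ ‖x‖ ≤ ‖y‖) : (E ⧸ LinearMap.ker ρ) ≃ₗᵢ[R] F where
  toLinearEquiv := ρ.quotKerEquivOfSurjective fun y => (hlift y).imp fun _ => And.left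
  norm_map' q := Submodule.Quotient.induction_on _ q fun x => (ρ.norm_mk_ker_eq hρ hlift x).symm

end QuotientKer

namespace ContinuousMap

variable {X : Type*} [TopologicalSpace X] [CompactSpace X] (K : Set X) [CompactSpace K]

theorem norm_restrict_le {E : Type*} [SeminormedAddCommGroup E] (f : C(X, E)) :
    ‖f.restrict K‖ ≤ ‖f‖ :=
  (norm_le _ (norm_nonneg f)).2 fun x => f.norm_coe_le_norm x

noncomputable def restrictL : C(X, ℝ) →L[ℝ] C(K, ℝ) :=
  LinearMap.mkContinuous
    { toFun := fun f => f.restrict K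
      map_add' := fun _ _ => rfl
      map_smul' := fun _ _ => rfl }
    1 fun f => (one_mul ‖f‖).symm ▸ norm_restrict_le K f

theorem restrictL_apply (f : C(X, ℝ)) : restrictL K f = f.restrict K :=
  rfl

theorem mem_ker_restrictL {f : C(X, ℝ)} :
    f ∈ LinearMap.ker (restrictL K : C(X, ℝ) →ₗ[ℝ] C(K, ℝ)) ↔ ∀ x ∈ K, f x = 0 := by
  simp [restrictL_apply, ContinuousMap.ext_iff]

theorem exists_restrict_eq_norm_eq [NormalSpace X] (hK : IsClosed K) (g : C(K, ℝ)) :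
    ∃ f : C(X, ℝ), f.restrict K = g ∧ ‖f‖ = ‖g‖ := by
  obtain ⟨f, hnorm, hf⟩ :=
    BoundedContinuousFunction.exists_norm_eq_domRestrict_eq_of_closed (.mkOfCompact g) hK
  refine ⟨f.toContinuousMap, ?_, ?_⟩
  · ext x
    exact congrArg (· x) hf
  · rw [← BoundedContinuousFunction.norm_mkOfCompact, ← BoundedContinuousFunction.norm_mkOfCompact]
    exact hnorm

end ContinuousMap

namespace ZeroAtInftyContinuousMap

variable {α β : Type*} [TopologicalSpace α] [SeminormedAddCommGroup β]

theorem norm_coe_le_norm (f : ZeroAtInftyContinuousMap α β) (x : α) : ‖f x‖ ≤ ‖f‖ :=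
  f.toBCF.norm_coe_le_norm x

theorem norm_le (f : ZeroAtInftyContinuousMap α β) {c : ℝ} (hc : 0 ≤ c) :
    ‖f‖ ≤ c ↔ ∀ x, ‖f x‖ ≤ c :=
  BoundedContinuousFunction.norm_le (f := f.toBCF) hc

end ZeroAtInftyContinuousMap

section Remainder

variable {Y : Type} [TopologicalSpace Y] [CompactSpace Y] {d : ℕ → Y}

theorem Zsub_eq_ker_restrictL [CompactSpace ↥((range d)ᶜ : Set Y)] :
    Zsub Y d =
      LinearMap.ker (ContinuousMap.restrictL (range d)ᶜ : C(Y, ℝ) →ₗ[ℝ] C(((range d)ᶜ : Set Y), ℝ)) := by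
  ext f
  rw [ContinuousMap.mem_ker_restrictL]
  rfl

noncomputable def Zsub.toCzeroₗ (hinj : Injective d) (hiso : ∀ n, IsOpen ({d n} : Set Y)) :
    Zsub Y d →ₗ[ℝ] czero where
  toFun f :=
    { toFun := fun n => (f : C(Y, ℝ)) (d n)
      zero_at_infty' := cocompact_eq_cofinite ℕ ▸
        tendsto_cofinite_comp_of_eq_off_range hinj hiso (f : C(Y, ℝ)) f.2 }
  map_add' _ _ := rfl
  map_smul' _ _ := rfl

theorem Zsub.norm_toCzeroₗ (hinj : Injective d) (hdense : DenseRange d)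
    (hiso : ∀ n, IsOpen ({d n} : Set Y)) (f : Zsub Y d) : ‖Zsub.toCzeroₗ hinj hiso f‖ = ‖f‖ := by
  refine le_antisymm ((ZeroAtInftyContinuousMap.norm_le _ (norm_nonneg _)).2 fun n => ?_)
    ((f : C(Y, ℝ)).norm_le_of_denseRange hdense (norm_nonneg _) fun n => ?_)
  · exact (f : C(Y, ℝ)).norm_coe_le_norm (d n)
  · exact (Zsub.toCzeroₗ hinj hiso f).norm_coe_le_norm n

theorem Zsub.toCzeroₗ_surjective [T2Space Y] (hinj : Injective d)
    (hiso : ∀ n, IsOpen ({d n} : Set Y)) : Surjective (Zsub.toCzeroₗ hinj hiso) := by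
  intro g
  have hg : Tendsto g cofinite (𝓝 0) := cocompact_eq_cofinite ℕ ▸ g.zero_at_infty'
  refine ⟨⟨⟨extend d g 0, continuous_extend_zero_of_tendsto hinj hiso hg⟩, fun y hy => ?_⟩, ?_⟩
  · exact extend_apply' _ _ _ fun ⟨n, hn⟩ => hy ⟨n, hn⟩
  · ext n
    exact hinj.extend_apply _ _ _

end Remainder

/-- For a compactification `Y` of `ℕ` with remainder `R`: (i) evaluation along `d` is a
linear isometric bijection of `Z₀` onto `c₀`; (ii) restriction to `R` is a bounded
surjective linear operator with kernel `Z₀` inducing an isometric isomorphism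
`C(Y)/Z₀ ≅ C(R)`. -/
theorem statement12 (Y : Type) [TopologicalSpace Y] [CompactSpace Y] [T2Space Y]
    (d : ℕ → Y) (hinj : Function.Injective d) (hdense : DenseRange d)
    (hiso : ∀ n : ℕ, IsOpen ({d n} : Set Y)) :
    haveI : CompactSpace ↥((Set.range d)ᶜ : Set Y) := by
      refine isCompact_iff_compactSpace.mp (IsClosed.isCompact ?_)
      rw [isClosed_compl_iff, Set.range_eq_iUnion]
      exact isOpen_iUnion hiso
    (∃ e : ↥(Zsub Y d) ≃ₗᵢ[ℝ] czero,
      ∀ f : ↥(Zsub Y d), ∀ n : ℕ, e f n = (f : C(Y, ℝ)) (d n)) ∧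
    (∃ ρ : C(Y, ℝ) →L[ℝ] C(((Set.range d)ᶜ : Set Y), ℝ),
      (∀ f : C(Y, ℝ), ρ f = f.restrict ((Set.range d)ᶜ : Set Y)) ∧
      Function.Surjective ρ ∧ LinearMap.ker (ρ : C(Y, ℝ) →ₗ[ℝ] C(((Set.range d)ᶜ : Set Y), ℝ)) = Zsub Y d) ∧
    ∃ e : (C(Y, ℝ) ⧸ Zsub Y d) ≃ₗᵢ[ℝ] C(((Set.range d)ᶜ : Set Y), ℝ),
      ∀ f : C(Y, ℝ), e (Submodule.Quotient.mk f) = f.restrict ((Set.range d)ᶜ : Set Y) := by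
  have hR : IsClosed (range d)ᶜ := isClosed_compl_range hiso
  have : CompactSpace ↥((range d)ᶜ : Set Y) := isCompact_iff_compactSpace.mp hR.isCompact
  set ρ := ContinuousMap.restrictL (X := Y) (range d)ᶜ
  have hlift : ∀ g, ∃ f, ρ f = g ∧ ‖f‖ ≤ ‖g‖ := fun g =>
    (ContinuousMap.exists_restrict_eq_norm_eq _ hR g).imp fun _ hf => ⟨hf.1, hf.2.le⟩
  refine ⟨⟨.ofSurjective ⟨Zsub.toCzeroₗ hinj hiso, Zsub.norm_toCzeroₗ hinj hdense hiso⟩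
      (Zsub.toCzeroₗ_surjective hinj hiso), fun _ _ => rfl⟩,
    ⟨ρ, fun _ => rfl, fun g => (hlift g).imp fun _ => And.left, Zsub_eq_ker_restrictL.symm⟩, ?_⟩
  rw [Zsub_eq_ker_restrictL]
  exact ⟨(ρ : C(Y, ℝ) →ₗ[ℝ] C(((range d)ᶜ : Set Y), ℝ)).quotKerIsometryEquiv
    (ContinuousMap.norm_restrict_le _) hlift, fun _ => rfl⟩
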